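/- The triplet (ℓ_∞, B_{c₀}, CB(ℓ_∞)) has property-(P₁): for every nonempty closed bounded subset B of ℓ_∞, the set cent_{B_{c₀}}(B) of restricted Chebyshev centers of B in the closed unit ball of c₀ is nonempty, and for each ε > 0 there exists δ > 0 such that every f in the unit ball of c₀ with r(f,B) ≤ rad_{B_{c₀}}(B) + δ lies within distance ε of cent_{B_{c₀}}(B). -/

import Mathlib

open Metric Set Bornology Pointwise

/-- The farthest distance `r(v,B) = sup_{b ∈ B} ‖v - b‖`. -/
noncomputable def farr {X : Type*} [NormedAddCommGroup X] (v : X) (B : Set X) : ℝ :=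
  ⨆ b : B, ‖v - (b : X)‖

/-- The restricted Chebyshev radius `rad_V(B) = inf_{v ∈ V} r(v,B)`. -/
noncomputable def rad {X : Type*} [NormedAddCommGroup X] (V B : Set X) : ℝ :=
  ⨅ v : V, farr (v : X) B

/-- The set of restricted Chebyshev centers of `B` in `V`. -/
noncomputable def cheb {X : Type*} [NormedAddCommGroup X] (V B : Set X) : Set X :=
  {v ∈ V | farr v B = rad V B}
/-- The subset of `ℓ∞` consisting of sequences converging to `0`, i.e. `c₀`. -/
def czero : Set (lp (fun _ : ℕ => ℝ) ⊤) :=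
  {f | Filter.Tendsto (fun n => f n) Filter.atTop (nhds 0)}

/-! In `ℓ^∞` the farthest distance splits over coordinates: `r(v, B) ≤ c` exactly when every
`v n` lies in `[sup_B b n - c, inf_B b n + c]`. With `r = rad_{B_{c₀}}(B)`, the intervals
`J n = [sup_B b n - r, inf_B b n + r] ∩ [-1, 1]` are nonempty, and they come within any `η > 0`
of `0` for large `n`, as a `c₀`-element with `r(v, B) < r + η / 2` shows. Clamping each
coordinate of `f` into `J n` therefore yields a restricted center; if `r(f, B) ≤ r + δ`, every
coordinate of `f` is within `δ` of `J n`, so the clamp moves `f` by at most `δ`. -/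

open Filter Topology
open scoped lp ENNReal

section Radius

variable {X : Type*} [NormedAddCommGroup X] {V B : Set X} {v : X} {c : ℝ}

lemma farr_nonneg : 0 ≤ farr v B :=
  Real.iSup_nonneg fun _ => norm_nonneg _

lemma rad_nonneg : 0 ≤ rad V B :=
  Real.iInf_nonneg fun _ => farr_nonneg

lemma rad_le_farr (hv : v ∈ V) : rad V B ≤ farr v B :=
  ciInf_le ⟨0, forall_mem_range.2 fun _ => farr_nonneg⟩ (⟨v, hv⟩ : V)

lemma le_rad (hV : V.Nonempty) (h : ∀ v ∈ V, c ≤ farr v B) : c ≤ rad V B :=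
  have := hV.to_subtype
  le_ciInf fun v => h v v.2

lemma exists_farr_lt (hV : V.Nonempty) (h : rad V B < c) : ∃ v ∈ V, farr v B < c := by
  have := hV.to_subtype
  obtain ⟨v, hv⟩ := exists_lt_of_ciInf_lt h
  exact ⟨v, v.2, hv⟩

end Radius

section Coordinates

variable {ι : Type*} {B : Set ℓ^∞(ι, ℝ)} {v : ℓ^∞(ι, ℝ)} {c : ℝ}

noncomputable def coordInf (B : Set ℓ^∞(ι, ℝ)) (i : ι) : ℝ := sInf ((fun b => b i) '' B)

noncomputable def coordSup (B : Set ℓ^∞(ι, ℝ)) (i : ι) : ℝ := sSup ((fun b => b i) '' B)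

lemma abs_apply_le_norm (v : ℓ^∞(ι, ℝ)) (i : ι) : |v i| ≤ ‖v‖ :=
  lp.norm_apply_le_norm ENNReal.top_ne_zero v i

lemma abs_apply_le_one (hv : v ∈ closedBall 0 1) (i : ι) : |v i| ≤ 1 :=
  (abs_apply_le_norm v i).trans (mem_closedBall_zero_iff.1 hv)

lemma abs_apply_sub_le_farr (hB : IsBounded B) {b : ℓ^∞(ι, ℝ)} (hb : b ∈ B) (i : ι) :
    |v i - b i| ≤ farr v B := by
  obtain ⟨R, hR⟩ := hB.subset_closedBall v
  have hbdd : BddAbove (range fun b : B => ‖v - (b : ℓ^∞(ι, ℝ))‖) :=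
    ⟨R, forall_mem_range.2 fun b => by simpa [dist_eq_norm'] using hR b.2⟩
  calc |v i - b i| ≤ ‖v - b‖ := abs_apply_le_norm (v - b) i
    _ ≤ farr v B := le_ciSup hbdd (⟨b, hb⟩ : B)

lemma bddAbove_image_apply (hB : IsBounded B) (i : ι) : BddAbove ((fun b => b i) '' B) :=
  ((lp.lipschitzWith_one_eval ∞ i).isBounded_image hB).bddAbove

lemma bddBelow_image_apply (hB : IsBounded B) (i : ι) : BddBelow ((fun b => b i) '' B) :=
  ((lp.lipschitzWith_one_eval ∞ i).isBounded_image hB).bddBelow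

lemma coordInf_le_apply (hB : IsBounded B) {b : ℓ^∞(ι, ℝ)} (hb : b ∈ B) (i : ι) :
    coordInf B i ≤ b i :=
  csInf_le (bddBelow_image_apply hB i) (mem_image_of_mem _ hb)

lemma apply_le_coordSup (hB : IsBounded B) {b : ℓ^∞(ι, ℝ)} (hb : b ∈ B) (i : ι) :
    b i ≤ coordSup B i :=
  le_csSup (bddAbove_image_apply hB i) (mem_image_of_mem _ hb)

lemma apply_mem_Icc_coord_farr (hB : IsBounded B) (hne : B.Nonempty) (i : ι) :
    v i ∈ Icc (coordSup B i - farr v B) (coordInf B i + farr v B) := by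
  constructor
  · refine sub_le_iff_le_add.2 (csSup_le (hne.image _) (forall_mem_image.2 fun b hb => ?_))
    linarith [(abs_le.1 (abs_apply_sub_le_farr (v := v) hB hb i)).1]
  · refine sub_le_iff_le_add.1 (le_csInf (hne.image _) (forall_mem_image.2 fun b hb => ?_))
    linarith [(abs_le.1 (abs_apply_sub_le_farr (v := v) hB hb i)).2]

lemma farr_le_of_forall_apply_mem_Icc (hB : IsBounded B) (hc : 0 ≤ c)
    (h : ∀ i, v i ∈ Icc (coordSup B i - c) (coordInf B i + c)) : farr v B ≤ c := by
  refine Real.iSup_le (fun b => lp.norm_le_of_forall_le hc fun i => ?_) hc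
  have hlo := coordInf_le_apply hB b.2 i
  have hhi := apply_le_coordSup hB b.2 i
  rw [lp.coeFn_sub, Pi.sub_apply, Real.norm_eq_abs, abs_le]
  constructor <;> linarith [(h i).1, (h i).2]

end Coordinates

lemma max_min_mem_Icc {lo hi x p q : ℝ} (hp : p ≤ hi) (hq : lo ≤ q) (hx : x ∈ Icc p q) :
    max lo (min hi x) ∈ Icc p q :=
  ⟨le_max_of_le_right (le_min hp hx.1), max_le hq (min_le_of_right_le hx.2)⟩

lemma tendsto_max_min_nhds_zero {α : Type*} {l : Filter α} {lo hi x : α → ℝ}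
    (hx : Tendsto x l (𝓝 0)) (hlo : ∀ η > 0, ∀ᶠ a in l, lo a < η)
    (hhi : ∀ η > 0, ∀ᶠ a in l, -η < hi a) :
    Tendsto (fun a => max (lo a) (min (hi a) (x a))) l (𝓝 0) := by
  refine tendsto_order.2 ⟨fun η hη => ?_, fun η hη => ?_⟩
  · filter_upwards [hhi (-η) (neg_pos.2 hη), tendsto_order.1 hx |>.1 η hη] with a ha hxa
    exact lt_max_of_lt_right (lt_min (by linarith) hxa)
  · filter_upwards [hlo η hη, tendsto_order.1 hx |>.2 η hη] with a ha hxa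
    exact max_lt ha (min_lt_of_right_lt hxa)

section UnitBall

variable {ι : Type*} {V B : Set ℓ^∞(ι, ℝ)}

lemma max_le_min_coord_rad (hB : IsBounded B) (hne : B.Nonempty) (hV : V.Nonempty)
    (hV1 : V ⊆ closedBall 0 1) (i : ι) :
    max (coordSup B i - rad V B) (-1) ≤ min (coordInf B i + rad V B) 1 := by
  have hcoord : ∀ v ∈ V, v i ∈ Icc (coordSup B i - farr v B) (coordInf B i + farr v B) ∧ |v i| ≤ 1 :=
    fun v hv => ⟨apply_mem_Icc_coord_farr hB hne i, abs_apply_le_one (hV1 hv) i⟩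
  have h₁ : (coordSup B i - coordInf B i) / 2 ≤ rad V B :=
    le_rad hV fun v hv => by linarith [(hcoord v hv).1.1, (hcoord v hv).1.2]
  have h₂ : coordSup B i - 1 ≤ rad V B :=
    le_rad hV fun v hv => by linarith [(hcoord v hv).1.1, (abs_le.1 (hcoord v hv).2).2]
  have h₃ : -1 - coordInf B i ≤ rad V B :=
    le_rad hV fun v hv => by linarith [(hcoord v hv).1.2, (abs_le.1 (hcoord v hv).2).1]
  exact le_min (max_le (by linarith) (by linarith)) (max_le (by linarith) (by norm_num))

end UnitBall

section CZero

variable {V B : Set ℓ^∞(ℕ, ℝ)}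

lemma eventually_coord_near_rad (hB : IsBounded B) (hne : B.Nonempty) (hV : V.Nonempty)
    (hV0 : V ⊆ czero) {η : ℝ} (hη : 0 < η) :
    ∀ᶠ n in atTop, coordSup B n - rad V B < η ∧ -η < coordInf B n + rad V B := by
  obtain ⟨v, hv, hfv⟩ := exists_farr_lt hV (lt_add_of_pos_right (rad V B) (half_pos hη))
  have hsmall : ∀ᶠ n in atTop, |v n| < η / 2 := by
    simpa [Real.dist_eq] using Metric.tendsto_nhds.1 (hV0 hv) (η / 2) (half_pos hη)
  filter_upwards [hsmall] with n hn
  have hvn := apply_mem_Icc_coord_farr (v := v) hB hne n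
  constructor <;> linarith [abs_lt.1 hn, hvn.1, hvn.2]

lemma zero_mem_czero_inter_closedBall : (0 : ℓ^∞(ℕ, ℝ)) ∈ czero ∩ closedBall 0 1 :=
  ⟨tendsto_const_nhds, mem_closedBall_self zero_le_one⟩

lemma exists_mem_cheb_norm_sub_le (hB : IsBounded B) (hne : B.Nonempty)
    {f : ℓ^∞(ℕ, ℝ)} (hf : f ∈ czero ∩ closedBall 0 1) {δ : ℝ} (hδ : 0 ≤ δ)
    (hfB : farr f B ≤ rad (czero ∩ closedBall 0 1) B + δ) :
    ∃ g ∈ cheb (czero ∩ closedBall 0 1) B, ‖f - g‖ ≤ δ := by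
  set V := czero ∩ closedBall (0 : ℓ^∞(ℕ, ℝ)) 1
  have hV : V.Nonempty := ⟨0, zero_mem_czero_inter_closedBall⟩
  set r := rad V B
  set lo : ℕ → ℝ := fun n => max (coordSup B n - r) (-1)
  set hi : ℕ → ℝ := fun n => min (coordInf B n + r) 1
  have hlohi : ∀ n, lo n ≤ hi n :=
    max_le_min_coord_rad hB hne hV inter_subset_right
  set g' : ℕ → ℝ := fun n => max (lo n) (min (hi n) (f n))
  have hg'_mem : ∀ n, g' n ∈ Icc (lo n) (hi n) := fun n =>
    ⟨le_max_left _ _, max_le (hlohi n) (min_le_left _ _)⟩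
  have hg'_abs : ∀ n, |g' n| ≤ 1 := fun n =>
    abs_le.2 ⟨(le_max_right _ _).trans (hg'_mem n).1, (hg'_mem n).2.trans (min_le_right _ _)⟩
  let g : ℓ^∞(ℕ, ℝ) := ⟨g', memℓp_infty ⟨1, forall_mem_range.2 hg'_abs⟩⟩
  have hgc₀ : g ∈ czero := by
    have hnear η (hη : 0 < η) := eventually_coord_near_rad hB hne hV inter_subset_left hη
    refine tendsto_max_min_nhds_zero hf.1 (fun η hη => ?_) (fun η hη => ?_)
    · filter_upwards [hnear η hη] with n hn using max_lt hn.1 (by linarith)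
    · filter_upwards [hnear η hη] with n hn using lt_min hn.2 (by linarith)
  have hgV : g ∈ V :=
    ⟨hgc₀, mem_closedBall_zero_iff.2 (lp.norm_le_of_forall_le zero_le_one hg'_abs)⟩
  have hgB : farr g B ≤ r := farr_le_of_forall_apply_mem_Icc hB rad_nonneg fun n =>
    ⟨(le_max_left _ _).trans (hg'_mem n).1, (hg'_mem n).2.trans (min_le_left _ _)⟩
  refine ⟨g, ⟨hgV, hgB.antisymm (rad_le_farr hgV)⟩, lp.norm_le_of_forall_le hδ fun n => ?_⟩
  have hfn := apply_mem_Icc_coord_farr (v := f) hB hne n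
  have hf1 := abs_le.1 (abs_apply_le_one hf.2 n)
  have hclose : g' n ∈ Icc (f n - δ) (f n + δ) :=
    max_min_mem_Icc (le_min (by linarith [hfn.2]) (by linarith))
      (max_le (by linarith [hfn.1]) (by linarith)) ⟨by linarith, by linarith⟩
  rw [lp.coeFn_sub, Pi.sub_apply, Real.norm_eq_abs, abs_le]
  exact ⟨by linarith [hclose.2], by linarith [hclose.1]⟩

end CZero

theorem stmt12 :
    ∀ B : Set (lp (fun _ : ℕ => ℝ) ⊤), B.Nonempty → IsClosed B → IsBounded B →
      (cheb (czero ∩ closedBall 0 1) B).Nonempty ∧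
      ∀ ε > (0 : ℝ), ∃ δ > (0 : ℝ),
        ∀ f ∈ czero ∩ closedBall 0 1,
          farr f B ≤ rad (czero ∩ closedBall 0 1) B + δ →
            ∃ g ∈ cheb (czero ∩ closedBall 0 1) B, ‖f - g‖ ≤ ε := by
  intro B hne _ hB
  refine ⟨?_, fun ε hε => ⟨ε, hε, fun f hf hfB => exists_mem_cheb_norm_sub_le hB hne hf hε.le hfB⟩⟩
  obtain ⟨f, hf, hfB⟩ := exists_farr_lt ⟨0, zero_mem_czero_inter_closedBall⟩
    (lt_add_one (rad (czero ∩ closedBall 0 1) B))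
  obtain ⟨g, hg, -⟩ := exists_mem_cheb_norm_sub_le hB hne hf zero_le_one hfB.le
  exact ⟨g, hg⟩
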